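/- arXiv:2109.03399 — 2 statements merged into one kernel-verified Lean document; each statement's English description precedes it below -/
import Mathlib

section
/- Let φ: ℝⁿ → ℝ∪{+∞} be twice differentiable at x̄ in the extended sense, let ψ: ℝⁿ → ℝ∪{+∞} be finite at x̄ with −∇φ(x̄) ∈ ∂ψ(x̄), and assume ψ is prox-regular and subdifferentially continuous at x̄ for −∇φ(x̄). Then 0 ∈ ∂_p(φ+ψ)(x̄), i.e. liminf_{x→x̄} [(φ+ψ)(x) − (φ+ψ)(x̄)]/‖x−x̄‖² > −∞. -/
open Filter Topology MeasureTheory Set RealInnerProductSpace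

noncomputable section

section TangentCones

variable {X : Type*} [AddCommGroup X] [Module ℝ X] [TopologicalSpace X]

/-- Bouligand (sequential) tangent cone. -/
def seqTangentCone (Ω : Set X) (xb : X) : Set X :=
  {v | ∃ (t : ℕ → ℝ) (vk : ℕ → X), (∀ k, 0 < t k) ∧ Tendsto t atTop (𝓝 0) ∧
      Tendsto vk atTop (𝓝 v) ∧ ∀ k, xb + t k • vk k ∈ Ω}

/-- Second-order tangent set. -/
def secondOrderTangent (Ω : Set X) (xb w : X) : Set X :=
  {u | ∃ (t : ℕ → ℝ) (uk : ℕ → X), (∀ k, 0 < t k) ∧ Tendsto t atTop (𝓝 0) ∧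
      Tendsto uk atTop (𝓝 u) ∧ ∀ k, xb + t k • w + ((t k)^2/2) • uk k ∈ Ω}

/-- Parabolic derivability of a set at `xb` for `w`. -/
def ParabolicallyDerivable (Ω : Set X) (xb w : X) : Prop :=
  (secondOrderTangent Ω xb w).Nonempty ∧
  ∀ u ∈ secondOrderTangent Ω xb w, ∃ (ε : ℝ) (ξ : ℝ → X), 0 < ε ∧
    (∀ t ∈ Icc (0:ℝ) ε, ξ t ∈ Ω) ∧ ξ 0 = xb ∧
    Tendsto (fun t : ℝ => t⁻¹ • (ξ t - ξ 0)) (𝓝[>] 0) (𝓝 w) ∧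
    Tendsto (fun t : ℝ => (2/t^2) • (ξ t - ξ 0 - t • w)) (𝓝[>] 0) (𝓝 u)

end TangentCones

section Subdiff

variable {X : Type*} [NormedAddCommGroup X] [InnerProductSpace ℝ X]

/-- Regular (Fréchet) subdifferential of an `ℝ∪{+∞}`-valued function. -/
def regSubdiff (f : X → EReal) (xb : X) : Set X :=
  {v | f xb ≠ ⊤ ∧ (0 : EReal) ≤
    Filter.liminf (fun x => ((‖x - xb‖⁻¹ : ℝ) : EReal) *
      (f x - f xb - ((⟪v, x - xb⟫ : ℝ) : EReal))) (𝓝[≠] xb)}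

/-- Proximal subdifferential. -/
def proxSubdiff (f : X → EReal) (xb : X) : Set X :=
  {v | f xb ≠ ⊤ ∧ (⊥ : EReal) <
    Filter.liminf (fun x => (((‖x - xb‖^2)⁻¹ : ℝ) : EReal) *
      (f x - f xb - ((⟪v, x - xb⟫ : ℝ) : EReal))) (𝓝[≠] xb)}

/-- Limiting (Mordukhovich) subdifferential. -/
def limSubdiff (f : X → EReal) (xb : X) : Set X :=
  {v | f xb ≠ ⊤ ∧ ∃ (x : ℕ → X) (vk : ℕ → X), Tendsto x atTop (𝓝 xb) ∧
      Tendsto (fun k => f (x k)) atTop (𝓝 (f xb)) ∧ Tendsto vk atTop (𝓝 v) ∧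
      ∀ k, vk k ∈ regSubdiff f (x k)}

/-- Graph of the limiting subdifferential. -/
def gphSubdiff (f : X → EReal) : Set (X × X) := {p | p.2 ∈ limSubdiff f p.1}

/-- Subgradient graphical derivative `D(∂f)(xb|vb)(w)`. -/
def gDeriv (f : X → EReal) (xb vb : X) (w : X) : Set X :=
  {z | (w, z) ∈ seqTangentCone (gphSubdiff f) (xb, vb)}

/-- First-order difference quotient. -/
def sdQuot (f : X → EReal) (xb : X) (t : ℝ) (w : X) : EReal :=
  ((t⁻¹ : ℝ) : EReal) * (f (xb + t • w) - f xb)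

/-- Subderivative `df(xb)(w)`. -/
def subderiv (f : X → EReal) (xb w : X) : EReal :=
  Filter.liminf (fun p : ℝ × X => sdQuot f xb p.1 p.2) ((𝓝[>] (0:ℝ)) ×ˢ 𝓝 w)

/-- Second-order difference quotient `Δ²_t f(xb, v)(w)`. -/
def ssdQuot (f : X → EReal) (xb v : X) (t : ℝ) (w : X) : EReal :=
  ((2 / t^2 : ℝ) : EReal) * (f (xb + t • w) - f xb - ((t * ⟪v, w⟫ : ℝ) : EReal))

/-- Second subderivative `d²f(xb|v)(w)`. -/
def secondSubderiv (f : X → EReal) (xb v w : X) : EReal :=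
  Filter.liminf (fun p : ℝ × X => ssdQuot f xb v p.1 p.2) ((𝓝[>] (0:ℝ)) ×ˢ 𝓝 w)

/-- Parabolic difference quotient. -/
def psdQuot (f : X → EReal) (xb w : X) (t : ℝ) (z : X) : EReal :=
  ((2 / t^2 : ℝ) : EReal) *
    (f (xb + t • w + (t^2/2) • z) - f xb - (t : EReal) * subderiv f xb w)

/-- Parabolic subderivative `d²f(xb)(w|z)`. -/
def parabolicSubderiv (f : X → EReal) (xb w z : X) : EReal :=
  Filter.liminf (fun p : ℝ × X => psdQuot f xb w p.1 p.2) ((𝓝[>] (0:ℝ)) ×ˢ 𝓝 z)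

/-- Twice epi-differentiability at `xb` for `v`. -/
def TwiceEpiDiff (f : X → EReal) (xb v : X) : Prop :=
  ∀ w : X, ∀ t : ℕ → ℝ, (∀ k, 0 < t k) → Tendsto t atTop (𝓝 0) →
    ∃ wk : ℕ → X, Tendsto wk atTop (𝓝 w) ∧
      Tendsto (fun k => ssdQuot f xb v (t k) (wk k)) atTop (𝓝 (secondSubderiv f xb v w))

/-- Parabolic epi-differentiability at `xb` for `w`. -/
def ParaEpiDiff (f : X → EReal) (xb w : X) : Prop :=
  {z : X | parabolicSubderiv f xb w z < ⊤}.Nonempty ∧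
  ∀ z : X, ∀ t : ℕ → ℝ, (∀ k, 0 < t k) → Tendsto t atTop (𝓝 0) →
    ∃ zk : ℕ → X, Tendsto zk atTop (𝓝 z) ∧
      Tendsto (fun k => psdQuot f xb w (t k) (zk k)) atTop (𝓝 (parabolicSubderiv f xb w z))

/-- Parabolic regularity at `xb` for `v`. -/
def ParaRegular (f : X → EReal) (xb v : X) : Prop :=
  f xb ≠ ⊤ ∧ ∀ w : X, secondSubderiv f xb v w < ⊤ →
    ∃ (t : ℕ → ℝ) (wk : ℕ → X), (∀ k, 0 < t k) ∧ Tendsto t atTop (𝓝 0) ∧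
      Tendsto wk atTop (𝓝 w) ∧
      Tendsto (fun k => ssdQuot f xb v (t k) (wk k)) atTop (𝓝 (secondSubderiv f xb v w)) ∧
      ∃ C : ℝ, ∀ k, ‖wk k - w‖ ≤ C * t k

/-- Prox-regularity of `f` at `xb` for `vb`. -/
def ProxRegular (f : X → EReal) (xb vb : X) : Prop :=
  ∃ r ε : ℝ, 0 < r ∧ 0 < ε ∧
    ∀ x ∈ Metric.closedBall xb ε, ∀ u ∈ Metric.closedBall xb ε,
      f u - f xb < (ε : EReal) → f xb - f u < (ε : EReal) →
      ∀ v ∈ limSubdiff f u ∩ Metric.closedBall vb ε,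
        f u + ((⟪v, x - u⟫ - r/2 * ‖x - u‖^2 : ℝ) : EReal) ≤ f x

/-- Subdifferential continuity of `f` at `xb` for `vb`. -/
def SubdiffCont (f : X → EReal) (xb vb : X) : Prop :=
  ∀ (x v : ℕ → X), Tendsto x atTop (𝓝 xb) → Tendsto v atTop (𝓝 vb) →
    (∀ k, v k ∈ limSubdiff f (x k)) →
    Tendsto (fun k => f (x k)) atTop (𝓝 (f xb))

/-- Strong metric subregularity of `∂f` at `xb` for `0`. -/
def StrongMetricSubreg (f : X → EReal) (xb : X) : Prop :=
  (0 : X) ∈ limSubdiff f xb ∧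
  ∃ κ : ℝ, 0 < κ ∧ ∃ U ∈ 𝓝 xb, ∀ x ∈ U, ∀ v ∈ limSubdiff f x, ‖x - xb‖ ≤ κ * ‖v‖

/-- Effective domain of an `ℝ∪{+∞}`-valued function. -/
def edom (f : X → EReal) : Set X := {x | f x < ⊤}

/-- Convexity for `EReal`-valued functions. -/
def EConvexOn (g : X → EReal) : Prop :=
  ∀ x y : X, ∀ a b : ℝ, 0 ≤ a → 0 ≤ b → a + b = 1 →
    g (a • x + b • y) ≤ ((a : ℝ) : EReal) * g x + ((b : ℝ) : EReal) * g y

/-- Convex (analytic) subdifferential. -/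
def convexSubdiff (g : X → EReal) (yb : X) : Set X :=
  {y | ∀ z : X, g yb + ((⟪y, z - yb⟫ : ℝ) : EReal) ≤ g z}

/-- Fenchel conjugate. -/
def fenchel (θ : X → EReal) (v : X) : EReal :=
  ⨆ z : X, ((⟪v, z⟫ : ℝ) : EReal) - θ z

/-- Lipschitz continuity around `yb` relative to the domain, with constant `l`. -/
def LipRelDom (g : X → EReal) (yb : X) (l : ℝ) : Prop :=
  0 ≤ l ∧ ∃ V ∈ 𝓝 yb, ∀ y₁ ∈ edom g ∩ V, ∀ y₂ ∈ edom g ∩ V,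
    g y₁ ≤ g y₂ + ((l * ‖y₁ - y₂‖ : ℝ) : EReal)

end Subdiff

section TDE

variable {X : Type*} [NormedAddCommGroup X] [InnerProductSpace ℝ X]
  [CompleteSpace X] [MeasureSpace X]

/-- Twice differentiability in the extended sense for a real-valued function. -/
def TwiceDiffExtR (f : X → ℝ) (xb : X) (Df : X) (A : X →L[ℝ] X) : Prop :=
  HasGradientAt f Df xb ∧
  ∃ (U D : Set X) (K : NNReal) (G : X → X),
    U ∈ 𝓝 xb ∧ D ⊆ U ∧ volume (U \ D) = 0 ∧
    LipschitzOnWith K f U ∧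
    (∀ y ∈ D, HasGradientAt f (G y) y) ∧
    Tendsto (fun y => (‖y - xb‖⁻¹ : ℝ) • (G y - Df - A (y - xb))) (𝓝[D \ {xb}] xb) (𝓝 0)

/-- Twice differentiability in the extended sense for an `ℝ∪{+∞}`-valued function
(finite and Lipschitz around `xb`). -/
def TwiceDiffExt (f : X → EReal) (xb : X) (Df : X) (A : X →L[ℝ] X) : Prop :=
  f xb ≠ ⊤ ∧
  HasGradientAt (fun y => (f y).toReal) Df xb ∧
  ∃ (U D : Set X) (K : NNReal) (G : X → X),
    U ∈ 𝓝 xb ∧ D ⊆ U ∧ volume (U \ D) = 0 ∧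
    (∀ y ∈ U, f y ≠ ⊤) ∧
    LipschitzOnWith K (fun y => (f y).toReal) U ∧
    (∀ y ∈ D, HasGradientAt (fun z => (f z).toReal) (G y) y) ∧
    Tendsto (fun y => (‖y - xb‖⁻¹ : ℝ) • (G y - Df - A (y - xb))) (𝓝[D \ {xb}] xb) (𝓝 0)

end TDE

/-- Euclidean space shorthand. -/
abbrev Eucl (n : ℕ) := EuclideanSpace ℝ (Fin n)

/-- Bundle `m` real numbers into a point of `Eucl m`. -/
def vecOf {m : ℕ} (f : Fin m → ℝ) : Eucl m := (EuclideanSpace.equiv (Fin m) ℝ).symm f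

/-- The Jacobian, as a continuous linear map, built from the component gradients. -/
def jacCLM {n m : ℕ} (DF : Fin m → Eucl n) : Eucl n →L[ℝ] Eucl m :=
  ((EuclideanSpace.equiv (Fin m) ℝ).symm.toContinuousLinearMap).comp
    (ContinuousLinearMap.pi fun i => (innerSL ℝ (DF i)))

end

section Helpers


lemma key1d {L : NNReal} {g : ℝ → ℝ} (hg : LipschitzWith L g) {c : ℝ}
    {E : Set ℝ} (hE : volume ((Set.Ioo (0:ℝ) 1) \ E) = 0) {g' : ℝ → ℝ}
    (hd : ∀ t ∈ E ∩ Set.Ioo (0:ℝ) 1, HasDerivAt g (g' t) t)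
    (hb : ∀ t ∈ E ∩ Set.Ioo (0:ℝ) 1, -c ≤ g' t) :
    g 0 - c ≤ g 1 := by
  set G : ℝ → ℝ := fun t => g t + t * L with hGdef
  have hmono : Monotone G := by
    intro s t hst
    have h1 := hg.dist_le_mul s t
    rw [Real.dist_eq, Real.dist_eq] at h1
    have h2 : g s - g t ≤ L * (t - s) := by
      rw [abs_of_nonpos (by linarith : s - t ≤ 0)] at h1
      have := le_abs_self (g s - g t)
      linarith
    simp only [hGdef]
    nlinarith
  have hcont : Continuous G := (hg.continuous.add (by continuity))
  have hSt : ∀ x, hmono.stieltjesFunction x = G x := by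
    intro x
    exact rightLim_eq_of_tendsto
      ((hcont.tendsto x).mono_left nhdsWithin_le_nhds)
  set μ := hmono.stieltjesFunction.measure with hμ
  have hae : ∀ᵐ t, t ∈ Set.Ioo (0:ℝ) 1 → ENNReal.ofReal ((L:ℝ) - c) ≤ μ.rnDeriv volume t := by
    filter_upwards [hmono.ae_hasDerivAt, Measure.rnDeriv_lt_top μ volume,
      (measure_eq_zero_iff_ae_notMem.1 hE)] with t h1 h2 h3 ht
    have htE : t ∈ E := by by_contra h; exact h3 ⟨ht, h⟩
    have hGd : HasDerivAt G (g' t + L) t :=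
      (hd t ⟨htE, ht⟩).add (hasDerivAt_mul_const (L:ℝ))
    have huniq : (μ.rnDeriv volume t).toReal = g' t + L := h1.unique hGd
    rw [ENNReal.ofReal_le_iff_le_toReal h2.ne, huniq]
    have := hb t ⟨htE, ht⟩
    linarith
  have step1 : ENNReal.ofReal ((L:ℝ) - c) ≤ ENNReal.ofReal (G 1 - G 0) := by
    calc ENNReal.ofReal ((L:ℝ) - c)
        = ∫⁻ _ in Set.Ioo (0:ℝ) 1, ENNReal.ofReal ((L:ℝ) - c) ∂volume := by
          rw [setLIntegral_const, Real.volume_Ioo]; simp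
      _ ≤ ∫⁻ t in Set.Ioo (0:ℝ) 1, μ.rnDeriv volume t ∂volume := by
          refine lintegral_mono_ae ?_
          exact (ae_restrict_iff' measurableSet_Ioo).2 hae
      _ ≤ μ (Set.Ioo (0:ℝ) 1) := Measure.setLIntegral_rnDeriv_le _
      _ ≤ μ (Set.Ioc (0:ℝ) 1) := measure_mono Set.Ioo_subset_Ioc_self
      _ = ENNReal.ofReal (G 1 - G 0) := by
          rw [StieltjesFunction.measure_Ioc, hSt, hSt]
  have h01 : G 0 ≤ G 1 := hmono (by norm_num)
  have : (L:ℝ) - c ≤ G 1 - G 0 :=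
    (ENNReal.ofReal_le_ofReal_iff (by linarith)).1 step1
  simp only [hGdef] at this ⊢
  push_cast at this
  linarith

lemma fubini_seg {n : ℕ} (xb : EuclideanSpace ℝ (Fin n)) {N : Set (EuclideanSpace ℝ (Fin n))}
    (hN : MeasurableSet N) (h0 : volume N = 0) :
    ∀ᵐ x : EuclideanSpace ℝ (Fin n),
      volume {t : ℝ | t ∈ Set.Ioo (0:ℝ) 1 ∧ xb + t • (x - xb) ∈ N} = 0 := by
  set S : Set (ℝ × EuclideanSpace ℝ (Fin n)) :=
    {p | p.1 ∈ Set.Ioo (0:ℝ) 1 ∧ xb + p.1 • (p.2 - xb) ∈ N} with hS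
  have hmeas : MeasurableSet S := by
    apply MeasurableSet.inter
    · exact measurable_fst measurableSet_Ioo
    · refine MeasurableSet.preimage hN ?_
      exact (continuous_const.add ((continuous_fst.smul
        (continuous_snd.sub continuous_const)))).measurable
  have hslice : ∀ t : ℝ, t ∈ Set.Ioo (0:ℝ) 1 →
      volume {x : EuclideanSpace ℝ (Fin n) | xb + t • (x - xb) ∈ N} = 0 := by
    intro t ht
    have ht0 : t ≠ 0 := ne_of_gt ht.1
    have hfun : (fun x : EuclideanSpace ℝ (Fin n) => xb + t • (x - xb)) =
        (fun z => xb + z) ∘ (fun w => t • w) ∘ (fun x => x + (-xb)) := by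
      funext x; simp [sub_eq_add_neg]
    have e1 : volume ((fun z : EuclideanSpace ℝ (Fin n) => xb + z) ⁻¹' N) = 0 := by
      rw [measure_preimage_add]; exact h0
    have e2 : volume ((fun w : EuclideanSpace ℝ (Fin n) => t • w) ⁻¹'
        ((fun z => xb + z) ⁻¹' N)) = 0 := by
      rw [Set.preimage_smul₀ ht0, Measure.addHaar_smul, e1, mul_zero]
    show volume ((fun x : EuclideanSpace ℝ (Fin n) => xb + t • (x - xb)) ⁻¹' N) = 0
    rw [hfun, Set.preimage_comp, Set.preimage_comp]
    rw [measure_preimage_add_right]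
    exact e2
  have hprod : ((volume : Measure ℝ).prod (volume : Measure (EuclideanSpace ℝ (Fin n)))) S = 0 := by
    rw [Measure.measure_prod_null hmeas]
    filter_upwards with t
    by_cases ht : t ∈ Set.Ioo (0:ℝ) 1
    · have : (Prod.mk t ⁻¹' S) = {x | xb + t • (x - xb) ∈ N} := by
        ext x
        constructor
        · rintro ⟨-, h⟩; exact h
        · intro h; exact ⟨ht, h⟩
      rw [this]; exact hslice t ht
    · have : (Prod.mk t ⁻¹' S) = ∅ := by
        ext x; simp [hS]; intro h1 h2; exact absurd ⟨h1, h2⟩ ht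
      simp [this]
  have hswap : ((volume : Measure (EuclideanSpace ℝ (Fin n))).prod (volume : Measure ℝ))
      (Prod.swap ⁻¹' S) = 0 := by
    have heq := Measure.prod_swap (μ := (volume : Measure (EuclideanSpace ℝ (Fin n))))
      (ν := (volume : Measure ℝ))
    have h1 : ((volume : Measure (EuclideanSpace ℝ (Fin n))).prod (volume : Measure ℝ)) (Prod.swap ⁻¹' S)
        = (Measure.map Prod.swap ((volume : Measure (EuclideanSpace ℝ (Fin n))).prod (volume : Measure ℝ))) S := by
      rw [Measure.map_apply measurable_swap hmeas]
    rw [h1, heq]; exact hprod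
  have := Measure.measure_ae_null_of_prod_null hswap
  filter_upwards [this] with x hx
  have : (Prod.mk x ⁻¹' (Prod.swap ⁻¹' S)) = {t : ℝ | t ∈ Set.Ioo (0:ℝ) 1 ∧ xb + t • (x - xb) ∈ N} := by
    ext t; simp [hS, Prod.swap]
  rwa [this] at hx

lemma taylor_lb {n : ℕ} {f : EuclideanSpace ℝ (Fin n) → ℝ} {xb Df : EuclideanSpace ℝ (Fin n)}
    {A : EuclideanSpace ℝ (Fin n) →L[ℝ] EuclideanSpace ℝ (Fin n)}
    {U D : Set (EuclideanSpace ℝ (Fin n))} {K : NNReal} {G : EuclideanSpace ℝ (Fin n) → EuclideanSpace ℝ (Fin n)}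
    (hU : U ∈ 𝓝 xb) (hDU : D ⊆ U) (hnull : volume (U \ D) = 0)
    (hlip : LipschitzOnWith K f U)
    (hGD : ∀ y ∈ D, HasGradientAt f (G y) y)
    (htend : Tendsto (fun y => (‖y - xb‖⁻¹ : ℝ) • (G y - Df - A (y - xb))) (𝓝[D \ {xb}] xb) (𝓝 0)) :
    ∃ C δ : ℝ, 0 ≤ C ∧ 0 < δ ∧ ∀ x ∈ Metric.ball xb δ,
      f xb + ⟪Df, x - xb⟫ - C * ‖x - xb‖^2 ≤ f x := by
  classical
  set M : ℝ := ‖A‖ + 1 with hM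
  have hM0 : 0 ≤ M := by positivity
  -- gradient bound near xb on D
  have hev : ∀ᶠ y in 𝓝[D \ {xb}] xb, ‖(‖y - xb‖⁻¹ : ℝ) • (G y - Df - A (y - xb))‖ ≤ 1 := by
    have := htend.eventually (Metric.ball_mem_nhds (0 : EuclideanSpace ℝ (Fin n)) one_pos)
    filter_upwards [this] with y hy
    simpa [Metric.mem_ball, dist_eq_norm] using hy.le
  obtain ⟨δ₁, hδ₁, hball⟩ := Metric.mem_nhdsWithin_iff.1 hev
  have hgb : ∀ y ∈ D, y ≠ xb → dist y xb < δ₁ → ‖G y - Df‖ ≤ M * ‖y - xb‖ := by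
    intro y hyD hyne hyd
    have h1 : ‖(‖y - xb‖⁻¹ : ℝ) • (G y - Df - A (y - xb))‖ ≤ 1 :=
      hball ⟨by rwa [Metric.mem_ball], hyD, by simpa using hyne⟩
    have hn0 : (0:ℝ) < ‖y - xb‖ := by
      rw [norm_pos_iff]; exact sub_ne_zero.2 hyne
    rw [norm_smul, Real.norm_eq_abs, abs_inv, abs_of_nonneg (norm_nonneg _)] at h1
    have h2 : ‖G y - Df - A (y - xb)‖ ≤ ‖y - xb‖ := by
      rw [inv_mul_le_iff₀ hn0] at h1; linarith [h1]
    have h3 : ‖A (y - xb)‖ ≤ ‖A‖ * ‖y - xb‖ := A.le_opNorm _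
    calc ‖G y - Df‖ = ‖(G y - Df - A (y - xb)) + A (y - xb)‖ := by rw [sub_add_cancel]
      _ ≤ ‖G y - Df - A (y - xb)‖ + ‖A (y - xb)‖ := norm_add_le _ _
      _ ≤ ‖y - xb‖ + ‖A‖ * ‖y - xb‖ := add_le_add h2 h3
      _ = M * ‖y - xb‖ := by rw [hM]; ring
  -- choose δ
  obtain ⟨δ, hδ0, hδsub⟩ := Metric.mem_nhds_iff.1 (inter_mem hU (Metric.ball_mem_nhds xb hδ₁))
  set N : Set (EuclideanSpace ℝ (Fin n)) := toMeasurable volume (U \ D) with hN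
  have hNmeas : MeasurableSet N := measurableSet_toMeasurable _ _
  have hN0 : volume N = 0 := by rw [hN, measure_toMeasurable]; exact hnull
  have hsubN : U \ D ⊆ N := subset_toMeasurable _ _
  have hae := fubini_seg xb hNmeas hN0
  set S : Set (EuclideanSpace ℝ (Fin n)) :=
    {x | x ∈ Metric.ball xb δ ∧ volume {t : ℝ | t ∈ Set.Ioo (0:ℝ) 1 ∧ xb + t • (x - xb) ∈ N} = 0}
    with hSdef
  -- the bound on S
  have hSbound : ∀ x ∈ S, f xb + ⟪Df, x - xb⟫ - M * ‖x - xb‖^2 ≤ f x := by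
    rintro x ⟨hxball, hxnull⟩
    by_cases hxx : x = xb
    · subst hxx; simp
    set h : EuclideanSpace ℝ (Fin n) := x - xb with hh
    have hh0 : h ≠ 0 := sub_ne_zero.2 hxx
    have hhn : (0:ℝ) < ‖h‖ := norm_pos_iff.2 hh0
    set c : ℝ → EuclideanSpace ℝ (Fin n) := fun t => xb + t • h with hc
    have hcball : ∀ t ∈ Set.Icc (0:ℝ) 1, c t ∈ Metric.ball xb δ := by
      intro t ht
      rw [Metric.mem_ball, hc]
      simp only [dist_eq_norm, add_sub_cancel_left]
      rw [norm_smul, Real.norm_eq_abs, abs_of_nonneg ht.1]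
      have hxd : ‖h‖ < δ := by rw [hh, ← dist_eq_norm]; exact hxball
      nlinarith [ht.2]
    have hcU : ∀ t ∈ Set.Icc (0:ℝ) 1, c t ∈ U := fun t ht => (hδsub (hcball t ht)).1
    -- Lipschitz of f ∘ c on Icc 0 1
    have hclip : LipschitzWith ‖h‖₊ c := by
      apply LipschitzWith.of_dist_le_mul
      intro s t
      have hst : c s - c t = (s - t) • h := by
        rw [hc]; simp only [add_sub_add_left_eq_sub, ← sub_smul]
      rw [dist_eq_norm, hst, norm_smul, Real.dist_eq, coe_nnnorm]
      exact le_of_eq (by rw [Real.norm_eq_abs, mul_comm])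
    have hfc : LipschitzOnWith (K * ‖h‖₊) (f ∘ c) (Set.Icc (0:ℝ) 1) :=
      hlip.comp (hclip.lipschitzOnWith) (fun t ht => hcU t ht)
    obtain ⟨g₁, hg₁lip, hg₁eq⟩ := hfc.extend_real
    set d : ℝ := ⟪Df, h⟫ with hd
    set g : ℝ → ℝ := fun t => g₁ t - t * d with hgdef
    have hglip : LipschitzWith (K * ‖h‖₊ + ‖d‖₊) g := by
      apply LipschitzWith.of_dist_le_mul
      intro s t
      have h1 := hg₁lip.dist_le_mul s t
      have h2 : dist (s * d) (t * d) = |d| * dist s t := by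
        rw [Real.dist_eq, Real.dist_eq, ← sub_mul, abs_mul, mul_comm]
      calc dist (g s) (g t) ≤ dist (g₁ s) (g₁ t) + dist (s * d) (t * d) := by
            rw [Real.dist_eq, Real.dist_eq, Real.dist_eq, hgdef]
            simp only []
            have : g₁ s - s * d - (g₁ t - t * d) = (g₁ s - g₁ t) - (s * d - t * d) := by ring
            rw [this]
            exact abs_sub _ _
        _ ≤ (K * ‖h‖₊) * dist s t + |d| * dist s t := by rw [h2]; exact add_le_add (by exact_mod_cast h1) le_rfl
        _ = ((K * ‖h‖₊ + ‖d‖₊ : NNReal) : ℝ) * dist s t := by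
            push_cast
            rw [Real.norm_eq_abs]
            ring
    set E : Set ℝ := {t | c t ∈ D} with hE
    have hEnull : volume (Set.Ioo (0:ℝ) 1 \ E) = 0 := by
      apply measure_mono_null _ hxnull
      intro t ⟨ht, htE⟩
      refine ⟨ht, ?_⟩
      have : c t ∈ U := hcU t ⟨ht.1.le, ht.2.le⟩
      exact hsubN ⟨this, htE⟩
    set g' : ℝ → ℝ := fun t => ⟪G (c t) - Df, h⟫ with hg'
    have hderiv : ∀ t ∈ E ∩ Set.Ioo (0:ℝ) 1, HasDerivAt g (g' t) t := by
      rintro t ⟨htE, htI⟩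
      have hyD : c t ∈ D := htE
      have hcd : HasDerivAt c h t := by
        have : HasDerivAt (fun s : ℝ => s • h) ((1:ℝ) • h) t := (hasDerivAt_id t).smul_const h
        exact (by simpa using this : HasDerivAt (fun s : ℝ => s • h) h t).const_add xb
      have hfd : HasDerivAt (f ∘ c) ⟪G (c t), h⟫ t := by
        have := (hGD _ hyD).hasFDerivAt.comp_hasDerivAt t hcd
        simpa [InnerProductSpace.toDual_apply_apply] using this
      have hg₁d : HasDerivAt g₁ ⟪G (c t), h⟫ t := by
        apply hfd.congr_of_eventuallyEq
        have hmem : Set.Ioo (0: ℝ) 1 ∈ 𝓝 t := Ioo_mem_nhds htI.1 htI.2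
        filter_upwards [hmem] with s hs
        exact (hg₁eq ⟨hs.1.le, hs.2.le⟩).symm
      have : HasDerivAt g (⟪G (c t), h⟫ - d) t := by
        exact hg₁d.sub (hasDerivAt_mul_const d)
      have heq : ⟪G (c t), h⟫ - d = g' t := by
        simp only [hg', hd, inner_sub_left]
      rwa [heq] at this
    have hbound : ∀ t ∈ E ∩ Set.Ioo (0:ℝ) 1, -(M * ‖h‖^2) ≤ g' t := by
      rintro t ⟨htE, htI⟩
      have hyD : c t ∈ D := htE
      have hyne : c t ≠ xb := by
        rw [hc]
        simp only [ne_eq, add_eq_left]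
        intro hcon
        exact hh0 (by simpa [smul_eq_zero, ne_of_gt htI.1] using hcon)
      have hyd : dist (c t) xb < δ₁ := by
        have := hcball t ⟨htI.1.le, htI.2.le⟩
        have h2 := hδsub this
        exact Metric.mem_ball.1 h2.2
      have hGb := hgb _ hyD hyne hyd
      have hnorm : ‖c t - xb‖ = t * ‖h‖ := by
        rw [hc]
        simp only [add_sub_cancel_left]
        rw [norm_smul, Real.norm_eq_abs, abs_of_nonneg htI.1.le]
      have hip : |⟪G (c t) - Df, h⟫| ≤ ‖G (c t) - Df‖ * ‖h‖ := abs_real_inner_le_norm _ _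
      have : |g' t| ≤ M * ‖h‖^2 := by
        rw [hg']
        calc |⟪G (c t) - Df, h⟫| ≤ ‖G (c t) - Df‖ * ‖h‖ := hip
          _ ≤ (M * ‖c t - xb‖) * ‖h‖ := by nlinarith [norm_nonneg h]
          _ = M * t * ‖h‖^2 := by rw [hnorm]; ring
          _ ≤ M * ‖h‖^2 := by nlinarith [mul_nonneg (mul_nonneg hM0 (sub_nonneg.2 htI.2.le)) (sq_nonneg ‖h‖)]
      linarith [neg_abs_le (g' t)]
    have hkey := key1d hglip hEnull hderiv hbound
    have hg0 : g 0 = f xb := by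
      rw [hgdef]
      simp only [zero_mul, sub_zero]
      have := hg₁eq (Set.left_mem_Icc.2 zero_le_one)
      rw [← this]
      show f (xb + (0:ℝ) • h) = f xb
      rw [zero_smul, add_zero]
    have hg1 : g 1 = f x - d := by
      rw [hgdef]
      simp only [one_mul]
      have := hg₁eq (Set.right_mem_Icc.2 zero_le_one)
      rw [← this]
      show f (xb + (1:ℝ) • h) - d = f x - d
      rw [one_smul, hh, add_sub_cancel]
    rw [hg0, hg1] at hkey
    rw [hd, hh] at hkey
    linarith [hkey]
  -- extend to all of the ball by continuity
  refine ⟨M, δ, hM0, hδ0, ?_⟩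
  intro x hx
  have hfc : ContinuousOn f (Metric.ball xb δ) :=
    (hlip.mono (fun y hy => (hδsub hy).1)).continuousOn
  set F : EuclideanSpace ℝ (Fin n) → ℝ :=
    fun y => f y - f xb - ⟪Df, y - xb⟫ + M * ‖y - xb‖^2 with hF
  have hFc : ContinuousOn F (Metric.ball xb δ) := by
    have c1 : Continuous fun y : EuclideanSpace ℝ (Fin n) => (⟪Df, y - xb⟫ : ℝ) :=
      continuous_const.inner (continuous_id.sub continuous_const)
    have c2 : Continuous fun y : EuclideanSpace ℝ (Fin n) => M * ‖y - xb‖^2 :=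
      continuous_const.mul (((continuous_id.sub continuous_const).norm).pow 2)
    exact ((hfc.sub continuousOn_const).sub c1.continuousOn).add c2.continuousOn
  have hFS : ∀ y ∈ S, 0 ≤ F y := by
    intro y hy
    have := hSbound y hy
    rw [hF]
    simp only []
    linarith
  -- S has full measure in ball, hence dense in ball
  have hscl : x ∈ closure S := by
    rw [mem_closure_iff]
    intro O hO hxO
    by_contra hne
    rw [Set.not_nonempty_iff_eq_empty] at hne
    have hsub : O ∩ Metric.ball xb δ ⊆ {y | ¬ volume {t : ℝ | t ∈ Set.Ioo (0:ℝ) 1 ∧ xb + t • (y - xb) ∈ N} = 0} := by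
      rintro y ⟨hyO, hyB⟩
      intro hvol
      have : y ∈ O ∩ S := ⟨hyO, hyB, hvol⟩
      rw [hne] at this
      exact this
    have hpos : 0 < volume (O ∩ Metric.ball xb δ) :=
      (hO.inter Metric.isOpen_ball).measure_pos volume ⟨x, hxO, hx⟩
    have hz : volume (O ∩ Metric.ball xb δ) = 0 := by
      apply measure_mono_null hsub
      exact ae_iff.1 hae
    rw [hz] at hpos; exact lt_irrefl _ hpos
  have hneb : (𝓝[S] x).NeBot := mem_closure_iff_nhdsWithin_neBot.1 hscl
  have hFx : Tendsto F (𝓝[S] x) (𝓝 (F x)) := by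
    have hco : ContinuousAt F x := by
      have : Metric.ball xb δ ∈ 𝓝 x := Metric.isOpen_ball.mem_nhds hx
      exact hFc.continuousAt this
    exact hco.continuousWithinAt.tendsto
  have hFpos : 0 ≤ F x := by
    apply ge_of_tendsto hFx
    filter_upwards [self_mem_nhdsWithin] with y hy
    exact hFS y hy
  rw [hF] at hFpos
  simp only [] at hFpos
  linarith


end Helpers

/-- if `φ` is twice differentiable at `xb` in the extended sense and `ψ`
is prox-regular and subdifferentially continuous at `xb` for `−∇φ(xb) ∈ ∂ψ(xb)`, then
`0` belongs to the proximal subdifferential of `φ + ψ` at `xb`. -/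

theorem statement16 {n : ℕ} (φ ψ : Eucl n → EReal)
    (hφbot : ∀ x, φ x ≠ ⊥) (hψbot : ∀ x, ψ x ≠ ⊥)
    (xb Dφ : Eucl n) (A : Eucl n →L[ℝ] Eucl n)
    (hφ : TwiceDiffExt φ xb Dφ A)
    (hψfin : ψ xb ≠ ⊤)
    (hstat : -Dφ ∈ limSubdiff ψ xb)
    (hpr : ProxRegular ψ xb (-Dφ))
    (hsc : SubdiffCont ψ xb (-Dφ)) :
    (0 : Eucl n) ∈ proxSubdiff (fun x => φ x + ψ x) xb := by
  obtain ⟨hφfin, hgrad, U, D, K, G, hU, hDU, hnull, hfinU, hlip, hGD, htend⟩ := hφ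
  obtain ⟨C, δ, hC0, hδ0, htay⟩ := taylor_lb hU hDU hnull hlip hGD htend
  obtain ⟨r, ε, hr, hε, Hpr⟩ := hpr
  obtain ⟨a0, ha0⟩ : ∃ a0 : ℝ, φ xb = (a0 : EReal) :=
    ⟨(φ xb).toReal, (EReal.coe_toReal hφfin (hφbot xb)).symm⟩
  obtain ⟨b0, hb0⟩ : ∃ b0 : ℝ, ψ xb = (b0 : EReal) :=
    ⟨(ψ xb).toReal, (EReal.coe_toReal hψfin (hψbot xb)).symm⟩
  have hsub0 : ψ xb - ψ xb < (ε : EReal) := by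
    rw [hb0, ← EReal.coe_sub, sub_self]
    exact_mod_cast hε
  have hprox : ∀ x ∈ Metric.closedBall xb ε,
      ψ xb + ((⟪-Dφ, x - xb⟫ - r/2 * ‖x - xb‖^2 : ℝ) : EReal) ≤ ψ x := by
    intro x hxball
    exact Hpr x hxball xb (Metric.mem_closedBall_self hε.le) hsub0 hsub0 (-Dφ)
      ⟨hstat, Metric.mem_closedBall_self hε.le⟩
  constructor
  · show φ xb + ψ xb ≠ ⊤
    rw [ha0, hb0, ← EReal.coe_add]
    exact EReal.coe_ne_top _
  · set c₀ : ℝ := -(C + r/2) with hc₀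
    set δ' : ℝ := min δ ε with hδ'
    have hδ'0 : 0 < δ' := lt_min hδ0 hε
    have hev : ∀ᶠ x in 𝓝[≠] xb, (c₀ : EReal) ≤
        (((‖x - xb‖^2)⁻¹ : ℝ) : EReal) *
          ((fun x => φ x + ψ x) x - (fun x => φ x + ψ x) xb -
            ((⟪(0 : Eucl n), x - xb⟫ : ℝ) : EReal)) := by
      filter_upwards [mem_nhdsWithin_of_mem_nhds (Metric.ball_mem_nhds xb hδ'0),
        self_mem_nhdsWithin] with x hx hne
      have hxne : x ≠ xb := hne
      have hq : (0:ℝ) < ‖x - xb‖^2 := by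
        have : (0:ℝ) < ‖x - xb‖ := norm_pos_iff.2 (sub_ne_zero.2 hxne)
        positivity
      have hiz : (⟪(0 : Eucl n), x - xb⟫ : ℝ) = 0 := inner_zero_left _
      simp only [hiz, EReal.coe_zero, sub_zero]
      by_cases hsum : φ x + ψ x = ⊤
      · rw [hsum, ha0, hb0, ← EReal.coe_add, EReal.top_sub_coe]
        rw [EReal.coe_mul_top_of_pos (by positivity)]
        exact le_top
      · have hφx : φ x ≠ ⊤ := by
          intro h; exact hsum (by rw [h]; exact EReal.top_add_of_ne_bot (hψbot x))
        have hψx : ψ x ≠ ⊤ := by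
          intro h; exact hsum (by rw [h]; exact EReal.add_top_of_ne_bot (hφbot x))
        obtain ⟨a, ha⟩ : ∃ a : ℝ, φ x = (a : EReal) :=
          ⟨(φ x).toReal, (EReal.coe_toReal hφx (hφbot x)).symm⟩
        obtain ⟨b, hb⟩ : ∃ b : ℝ, ψ x = (b : EReal) :=
          ⟨(ψ x).toReal, (EReal.coe_toReal hψx (hψbot x)).symm⟩
        have h1 : a0 + ⟪Dφ, x - xb⟫ - C * ‖x - xb‖^2 ≤ a := by
          have hxball : x ∈ Metric.ball xb δ :=
            Metric.ball_subset_ball (min_le_left δ ε) hx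
          have := htay x hxball
          rw [ha0, ha] at this
          simpa using this
        have h2 : b0 + (⟪-Dφ, x - xb⟫ - r/2 * ‖x - xb‖^2) ≤ b := by
          have hxcb : x ∈ Metric.closedBall xb ε :=
            (Metric.ball_subset_closedBall.trans
              (Metric.closedBall_subset_closedBall (min_le_right δ ε))) hx
          have := hprox x hxcb
          rw [hb0, hb, ← EReal.coe_add] at this
          exact_mod_cast this
        have hneg : (⟪-Dφ, x - xb⟫ : ℝ) = -⟪Dφ, x - xb⟫ := inner_neg_left _ _
        rw [ha, hb, ha0, hb0, ← EReal.coe_add, ← EReal.coe_add, ← EReal.coe_sub, ← EReal.coe_mul]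
        rw [EReal.coe_le_coe_iff]
        have hs : -(C + r/2) * ‖x - xb‖^2 ≤ a + b - (a0 + b0) := by
          rw [hneg] at h2; nlinarith
        have hinv : (0:ℝ) ≤ (‖x - xb‖^2)⁻¹ := by positivity
        have hmul := mul_le_mul_of_nonneg_left hs hinv
        have heq : (‖x - xb‖^2)⁻¹ * (-(C + r/2) * ‖x - xb‖^2) = -(C + r/2) := by
          rw [mul_comm (‖x - xb‖^2)⁻¹, mul_assoc, mul_inv_cancel₀ hq.ne', mul_one]
        rw [heq] at hmul
        linarith
    have := le_liminf_of_le (h := hev)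
    exact lt_of_lt_of_le (EReal.bot_lt_coe c₀) this
end

section
/- Define f: ℝ → ℝ by f(x) = ∫₀ˣ g(t) dt, where g(t) = t² sin(1/t²) for t ≠ 0 and g(0) = 0. Then: (a) f is differentiable on ℝ with f' = g, and f is twice differentiable (in the classical sense) at every point of ℝ, with f''(x) = 2x·sin(1/x²) − (2/x)·cos(1/x²) for x ≠ 0 and f''(0) = 0; (b) for every r > 0 and ε > 0 there exist u, x ∈ (0, ε) with (f'(u) − f'(x))(u − x) < −r(u − x)²; consequently f is not prox-regular at 0 for 0 = f'(0). -/
open Filter Topology MeasureTheory Set RealInnerProductSpace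

section Statement19Aux

open Real in
private lemma s19_gbound (g : ℝ → ℝ) (hg0 : g 0 = 0)
    (hg : ∀ t : ℝ, t ≠ 0 → g t = t^2 * Real.sin (1/t^2)) :
    ∀ t : ℝ, |g t| ≤ t^2 := by
  intro t
  rcases eq_or_ne t 0 with rfl | ht
  · simp [hg0]
  · rw [hg t ht, abs_mul, abs_sq]
    calc t^2 * |Real.sin (1/t^2)| ≤ t^2 * 1 := by
          gcongr
          exact Real.abs_sin_le_one _
      _ = t^2 := mul_one _

private lemma s19_gcont (g : ℝ → ℝ) (hg0 : g 0 = 0)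
    (hg : ∀ t : ℝ, t ≠ 0 → g t = t^2 * Real.sin (1/t^2)) :
    Continuous g := by
  rw [continuous_iff_continuousAt]
  intro x
  rcases eq_or_ne x 0 with rfl | hx
  · have h0 : Tendsto g (𝓝 0) (𝓝 0) := by
      apply squeeze_zero_norm (s19_gbound g hg0 hg)
      simpa using (continuous_pow 2).tendsto (0:ℝ)
    simpa [ContinuousAt, hg0] using h0
  · have hev : ∀ᶠ t in 𝓝 x, t^2 * Real.sin (1/t^2) = g t := by
      filter_upwards [isOpen_ne.mem_nhds hx] with t ht using (hg t ht).symm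
    have : ContinuousAt (fun t : ℝ => t^2 * Real.sin (1/t^2)) x := by
      have h1 : ContinuousAt (fun t : ℝ => 1/t^2) x :=
        continuousAt_const.div ((continuous_pow 2).continuousAt) (pow_ne_zero 2 hx)
      exact ((continuous_pow 2).continuousAt).mul (Real.continuous_sin.continuousAt.comp h1)
    exact this.congr hev

open Real in
set_option maxHeartbeats 1000000 in
private lemma s19_osc (g : ℝ → ℝ)
    (hg : ∀ t : ℝ, t ≠ 0 → g t = t^2 * Real.sin (1/t^2))
    (r ε : ℝ) (hr : 0 < r) (hε : 0 < ε) :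
    ∃ u ∈ Ioo (0:ℝ) ε, ∃ x ∈ Ioo (0:ℝ) ε,
      (g u - g x) * (u - x) < -r * (u - x)^2 := by
  obtain ⟨k, hk⟩ := exists_nat_ge (r^2 * π^2 + ε⁻¹^2 + 1)
  obtain ⟨b, hbdef⟩ : ∃ b:ℝ, b = 2*π*k - π/2 := ⟨_, rfl⟩
  obtain ⟨a, hadef⟩ : ∃ a:ℝ, a = 2*π*k + π/2 := ⟨_, rfl⟩
  have hπ := Real.pi_gt_three
  have hk1 : (1:ℝ) ≤ (k:ℝ) := by
    nlinarith [sq_nonneg r, sq_nonneg ε⁻¹, mul_pos hr hε, sq_nonneg (r*π), inv_pos.mpr hε]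
  have hbk : (k:ℝ) ≤ b := by
    rw [hbdef]
    nlinarith [mul_le_mul_of_nonneg_left hk1 (by linarith : (0:ℝ) ≤ 2*π-1)]
  have hb0 : 0 < b := by nlinarith
  have hab : b < a := by rw [hbdef, hadef]; nlinarith
  have ha0 : 0 < a := lt_trans hb0 hab
  obtain ⟨u, hudef⟩ : ∃ u:ℝ, u = (Real.sqrt b)⁻¹ := ⟨_, rfl⟩
  obtain ⟨x, hxdef⟩ : ∃ x:ℝ, x = (Real.sqrt a)⁻¹ := ⟨_, rfl⟩
  have hsb : 0 < Real.sqrt b := Real.sqrt_pos.mpr hb0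
  have hsa : 0 < Real.sqrt a := Real.sqrt_pos.mpr ha0
  have hu0 : 0 < u := hudef ▸ inv_pos.mpr hsb
  have hx0 : 0 < x := hxdef ▸ inv_pos.mpr hsa
  have hu2 : u^2 = b⁻¹ := by rw [hudef, ← Real.sqrt_inv]; exact Real.sq_sqrt (by positivity)
  have hx2 : x^2 = a⁻¹ := by rw [hxdef, ← Real.sqrt_inv]; exact Real.sq_sqrt (by positivity)
  have hsinb : Real.sin b = -1 := by
    have : b = -(π/2) + k * (2*π) := by rw [hbdef]; ring
    rw [this, Real.sin_add_nat_mul_two_pi, Real.sin_neg, Real.sin_pi_div_two]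
  have hsina : Real.sin a = 1 := by
    have : a = π/2 + k * (2*π) := by rw [hadef]; ring
    rw [this, Real.sin_add_nat_mul_two_pi, Real.sin_pi_div_two]
  have hgu : g u = -b⁻¹ := by
    rw [hg u hu0.ne', hu2, one_div, inv_inv, hsinb]; ring
  have hgx : g x = a⁻¹ := by
    rw [hg x hx0.ne', hx2, one_div, inv_inv, hsina]; ring
  have hsba : Real.sqrt b < Real.sqrt a := Real.sqrt_lt_sqrt hb0.le hab
  have hxu : x < u := by
    rw [hxdef, hudef]
    exact inv_strictAnti₀ hsb hsba
  have hbr : r^2 * π^2 < b := by nlinarith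
  have hbε : ε⁻¹^2 < b := by nlinarith
  have huε : u < ε := by
    have h1 : ε⁻¹ < Real.sqrt b := by
      have := Real.sqrt_lt_sqrt (by positivity) hbε
      rwa [Real.sqrt_sq (le_of_lt (inv_pos.mpr hε))] at this
    calc u = (Real.sqrt b)⁻¹ := hudef
      _ < ε⁻¹⁻¹ := inv_strictAnti₀ (inv_pos.mpr hε) h1
      _ = ε := inv_inv ε
  have hxε : x < ε := lt_trans hxu huε
  have hdiff : u - x ≤ π / (2 * b * Real.sqrt b) := by
    have h1 : u - x = (Real.sqrt a - Real.sqrt b) / (Real.sqrt a * Real.sqrt b) := by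
      rw [hudef, hxdef]; field_simp
    have h2 : Real.sqrt a - Real.sqrt b = π / (Real.sqrt a + Real.sqrt b) := by
      have key : (Real.sqrt a - Real.sqrt b) * (Real.sqrt a + Real.sqrt b) = π := by
        have e : (Real.sqrt a - Real.sqrt b) * (Real.sqrt a + Real.sqrt b)
            = Real.sqrt a ^ 2 - Real.sqrt b ^ 2 := by ring
        rw [e, Real.sq_sqrt ha0.le, Real.sq_sqrt hb0.le, hadef, hbdef]; ring
      rw [eq_div_iff (by positivity)]; exact key
    rw [h1, h2, div_div]
    apply div_le_div_of_nonneg_left Real.pi_pos.le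
    · positivity
    · have hba : Real.sqrt b ≤ Real.sqrt a := hsba.le
      have e1 : (Real.sqrt a + Real.sqrt b) * (Real.sqrt a * Real.sqrt b)
          = Real.sqrt a ^ 2 * Real.sqrt b + Real.sqrt a * Real.sqrt b ^ 2 := by ring
      rw [e1, Real.sq_sqrt ha0.le, Real.sq_sqrt hb0.le]
      nlinarith [mul_le_mul_of_nonneg_right hab.le hsb.le,
        mul_le_mul_of_nonneg_right hba hb0.le]
  have hrb : r * π < 2 * Real.sqrt b := by
    have : r * π = Real.sqrt (r^2 * π^2) := by
      rw [show r^2*π^2 = (r*π)^2 by ring, Real.sqrt_sq (by positivity)]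
    nlinarith [Real.sqrt_lt_sqrt (by positivity : (0:ℝ) ≤ r^2*π^2) hbr,
      this, Real.sqrt_nonneg b]
  have hkey : r * (u - x) < b⁻¹ := by
    calc r * (u - x) ≤ r * (π / (2 * b * Real.sqrt b)) := by
          apply mul_le_mul_of_nonneg_left hdiff hr.le
      _ = (r * π) / (2 * b * Real.sqrt b) := by ring
      _ < (2 * Real.sqrt b) / (2 * b * Real.sqrt b) := by
          gcongr
      _ = b⁻¹ := by field_simp
  refine ⟨u, ⟨hu0, huε⟩, x, ⟨hx0, hxε⟩, ?_⟩
  rw [hgu, hgx]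
  have hux : 0 < u - x := sub_pos.mpr hxu
  have ha_inv : 0 < a⁻¹ := inv_pos.mpr ha0
  have h1 : r * (u - x) < b⁻¹ + a⁻¹ := lt_add_of_lt_of_pos hkey ha_inv
  have h2 : r * (u - x) * (u - x) < (b⁻¹ + a⁻¹) * (u - x) :=
    mul_lt_mul_of_pos_right h1 hux
  nlinarith [h2]

/-- The derivative belongs to the limiting subdifferential. -/
private lemma s19_mem_limSubdiff (f : ℝ → ℝ) (u v : ℝ) (hd : HasDerivAt f v u) :
    v ∈ limSubdiff (fun x : ℝ => ((f x : ℝ) : EReal)) u := by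
  have hip : ∀ a b : ℝ, (inner ℝ a b : ℝ) = a * b := fun a b => by
    simp [RCLike.inner_apply, mul_comm]
  have hreg : v ∈ regSubdiff (fun x : ℝ => ((f x : ℝ) : EReal)) u := by
    refine ⟨EReal.coe_ne_top _, ?_⟩
    set φ : ℝ → ℝ := fun x => ‖x - u‖⁻¹ * (f x - f u - v * (x - u)) with hφdef
    have heq : (fun x : ℝ => ((‖x - u‖⁻¹ : ℝ) : EReal) *
        (((f x : ℝ) : EReal) - ((f u : ℝ) : EReal) - ((inner ℝ v (x - u) : ℝ) : EReal)))
        = fun x => ((φ x : ℝ) : EReal) := by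
      funext x
      rw [hip, ← EReal.coe_sub, ← EReal.coe_sub, ← EReal.coe_mul]
    have hslope : Tendsto (slope f u) (𝓝[≠] u) (𝓝 v) :=
      hasDerivAt_iff_tendsto_slope.mp hd
    have hφ : Tendsto φ (𝓝[≠] u) (𝓝 0) := by
      apply squeeze_zero_norm' (a := fun x => ‖slope f u x - v‖)
      · filter_upwards [self_mem_nhdsWithin] with x (hx : x ≠ u)
        have hxu : x - u ≠ 0 := sub_ne_zero.mpr hx
        have : slope f u x - v = (f x - f u - v * (x - u)) / (x - u) := by
          rw [slope_def_field]; field_simp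
        rw [hφdef]
        simp only [Real.norm_eq_abs, this, abs_div, abs_mul, abs_inv, abs_abs]
        rw [div_eq_inv_mul]
      · have : Tendsto (fun x => slope f u x - v) (𝓝[≠] u) (𝓝 0) := by
          simpa using hslope.sub (tendsto_const_nhds (x := v))
        simpa using this.norm
    have hφE : Tendsto (fun x => ((φ x : ℝ) : EReal)) (𝓝[≠] u) (𝓝 ((0:ℝ) : EReal)) :=
      EReal.tendsto_coe.mpr hφ
    rw [heq, hφE.liminf_eq]
    simp
  exact ⟨EReal.coe_ne_top _, fun _ => u, fun _ => v, tendsto_const_nhds,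
    tendsto_const_nhds, tendsto_const_nhds, fun _ => hreg⟩

end Statement19Aux

/-- Example: twice differentiability does not imply prox-regularity.
For `f(x) = ∫₀ˣ g(t) dt` with `g(t) = t²sin(1/t²)` (`g(0) = 0`):
(a) `f' = g` everywhere and `f` is twice differentiable in the classical sense at every
point, with the indicated second derivative; (b) `f` is not prox-regular at `0` for `0`. -/
theorem statement19 (g f : ℝ → ℝ)
    (hg0 : g 0 = 0)
    (hg : ∀ t : ℝ, t ≠ 0 → g t = t^2 * Real.sin (1/t^2))
    (hf : ∀ x : ℝ, f x = ∫ t in (0:ℝ)..x, g t) :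
    -- (a) f is differentiable with f' = g, and f is twice differentiable everywhere
    (∀ x : ℝ, HasDerivAt f (g x) x) ∧
    HasDerivAt g 0 0 ∧
    (∀ x : ℝ, x ≠ 0 →
      HasDerivAt g (2*x*Real.sin (1/x^2) - (2/x)*Real.cos (1/x^2)) x) ∧
    -- (b) failure of prox-regularity at 0 for 0 = f'(0)
    (∀ r ε : ℝ, 0 < r → 0 < ε → ∃ u ∈ Ioo (0:ℝ) ε, ∃ x ∈ Ioo (0:ℝ) ε,
      (g u - g x) * (u - x) < -r * (u - x)^2) ∧
    ¬ ProxRegular (fun x : ℝ => ((f x : ℝ) : EReal)) 0 0 := by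
  have hgb := s19_gbound g hg0 hg
  have hgc := s19_gcont g hg0 hg
  have hip : ∀ a b : ℝ, (inner ℝ a b : ℝ) = a * b := fun a b => by
    simp [RCLike.inner_apply, mul_comm]
  have part1 : ∀ x : ℝ, HasDerivAt f (g x) x := by
    intro x
    have hfe : f = fun x => ∫ t in (0:ℝ)..x, g t := funext hf
    rw [hfe]
    exact intervalIntegral.integral_hasDerivAt_right
      (hgc.intervalIntegrable 0 x)
      (hgc.stronglyMeasurableAtFilter _ _)
      hgc.continuousAt
  have part2 : HasDerivAt g 0 0 := by
    rw [hasDerivAt_iff_tendsto_slope]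
    apply squeeze_zero_norm' (a := fun t : ℝ => |t|)
    · filter_upwards [self_mem_nhdsWithin] with t (ht : t ≠ 0)
      have : slope g 0 t = g t / t := by simp [slope_def_field, hg0]
      rw [this, Real.norm_eq_abs, abs_div]
      calc |g t| / |t| ≤ t^2 / |t| := by gcongr; exact hgb t
        _ = |t| := by rw [← sq_abs]; field_simp [abs_ne_zero.mpr ht]
    · have : Tendsto (fun t : ℝ => |t|) (𝓝 0) (𝓝 0) := by
        simpa using continuous_abs.tendsto (0:ℝ)
      exact this.mono_left nhdsWithin_le_nhds
  have part3 : ∀ x : ℝ, x ≠ 0 →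
      HasDerivAt g (2*x*Real.sin (1/x^2) - (2/x)*Real.cos (1/x^2)) x := by
    intro x hx
    have h1 : HasDerivAt (fun t : ℝ => 1/t^2) (-2/x^3) x := by
      have := (hasDerivAt_const x (1:ℝ)).div (hasDerivAt_pow 2 x) (pow_ne_zero 2 hx)
      exact this.congr_deriv (by field_simp; ring)
    have h2 : HasDerivAt (fun t : ℝ => Real.sin (1/t^2)) (Real.cos (1/x^2) * (-2/x^3)) x :=
      (Real.hasDerivAt_sin _).comp x h1
    have h3 : HasDerivAt (fun t : ℝ => t^2 * Real.sin (1/t^2))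
        (2*x*Real.sin (1/x^2) - (2/x)*Real.cos (1/x^2)) x := by
      have := (hasDerivAt_pow 2 x).mul h2
      exact this.congr_deriv (by field_simp; ring)
    apply h3.congr_of_eventuallyEq
    filter_upwards [isOpen_ne.mem_nhds hx] with t ht using hg t ht
  have part4 := s19_osc g hg
  refine ⟨part1, part2, part3, part4, ?_⟩
  -- not prox-regular
  rintro ⟨r, ε, hr, hε, H⟩
  -- bound on |f t| for small positive t
  have hf0 : f 0 = 0 := by rw [hf]; simp
  have hfb : ∀ t : ℝ, 0 < t → t ≤ 1 → |f t| ≤ t := by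
    intro t ht ht1
    have hb : ∀ s ∈ Set.uIoc (0:ℝ) t, ‖g s‖ ≤ t^2 := by
      intro s hs
      rw [Set.uIoc_of_le ht.le] at hs
      rw [Real.norm_eq_abs]
      calc |g s| ≤ s^2 := hgb s
        _ ≤ t^2 := by nlinarith [hs.1, hs.2]
    have := intervalIntegral.norm_integral_le_of_norm_le_const hb
    rw [← hf t] at this
    rw [Real.norm_eq_abs] at this
    calc |f t| ≤ t^2 * |t - 0| := this
      _ = t^2 * t := by rw [sub_zero, abs_of_pos ht]
      _ ≤ 1 * t := by nlinarith
      _ = t := one_mul t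
  set ε' : ℝ := min ε 1 with hε'def
  have hε'pos : 0 < ε' := lt_min hε one_pos
  obtain ⟨u, ⟨hu0, huε⟩, x, ⟨hx0, hxε⟩, hosc⟩ := part4 r ε' hr hε'pos
  have huε1 : u < 1 := lt_of_lt_of_le huε (min_le_right _ _)
  have huεε : u < ε := lt_of_lt_of_le huε (min_le_left _ _)
  have hxε1 : x < 1 := lt_of_lt_of_le hxε (min_le_right _ _)
  have hxεε : x < ε := lt_of_lt_of_le hxε (min_le_left _ _)
  -- side conditions
  have hmem : ∀ t : ℝ, 0 < t → t < ε → t ∈ Metric.closedBall (0:ℝ) ε := by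
    intro t ht htε
    rw [Metric.mem_closedBall, Real.dist_eq, sub_zero, abs_of_pos ht]
    exact htε.le
  have hfsmall : ∀ t : ℝ, 0 < t → t < ε' → |f t| < ε := by
    intro t ht htε
    calc |f t| ≤ t := hfb t ht (le_of_lt (lt_of_lt_of_le htε (min_le_right _ _)))
      _ < ε := lt_of_lt_of_le htε (min_le_left _ _)
  have hgsmall : ∀ t : ℝ, 0 < t → t < ε' → |g t| ≤ ε := by
    intro t ht htε
    have ht1 : t < 1 := lt_of_lt_of_le htε (min_le_right _ _)
    calc |g t| ≤ t^2 := hgb t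
      _ ≤ t := by nlinarith
      _ ≤ ε := le_of_lt (lt_of_lt_of_le htε (min_le_left _ _))
  have hvmem : ∀ t : ℝ, 0 < t → t < ε' →
      g t ∈ limSubdiff (fun y : ℝ => ((f y : ℝ) : EReal)) t ∩ Metric.closedBall (0:ℝ) ε := by
    intro t ht htε
    refine ⟨s19_mem_limSubdiff f t (g t) (part1 t), ?_⟩
    rw [Metric.mem_closedBall, Real.dist_eq, sub_zero]
    exact hgsmall t ht htε
  have hfcond : ∀ t : ℝ, 0 < t → t < ε' →
      ((f t : ℝ) : EReal) - ((f 0 : ℝ) : EReal) < (ε : EReal) ∧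
      ((f 0 : ℝ) : EReal) - ((f t : ℝ) : EReal) < (ε : EReal) := by
    intro t ht htε
    have h := hfsmall t ht htε
    rw [abs_lt] at h
    constructor
    · rw [← EReal.coe_sub]; exact_mod_cast (by linarith : f t - f 0 < ε)
    · rw [← EReal.coe_sub]; exact_mod_cast (by linarith : f 0 - f t < ε)
  -- apply prox-regularity twice
  have hI1 := H x (hmem x hx0 hxεε) u (hmem u hu0 huεε)
    (hfcond u hu0 huε).1 (hfcond u hu0 huε).2 (g u) (hvmem u hu0 huε)
  have hI2 := H u (hmem u hu0 huεε) x (hmem x hx0 hxεε)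
    (hfcond x hx0 hxε).1 (hfcond x hx0 hxε).2 (g x) (hvmem x hx0 hxε)
  -- convert to real inequalities
  have hr1 : f u + (g u * (x - u) - r/2 * ‖x - u‖^2) ≤ f x := by
    rw [hip] at hI1
    rw [← EReal.coe_add] at hI1
    exact EReal.coe_le_coe_iff.mp hI1
  have hr2 : f x + (g x * (u - x) - r/2 * ‖u - x‖^2) ≤ f u := by
    rw [hip] at hI2
    rw [← EReal.coe_add] at hI2
    exact EReal.coe_le_coe_iff.mp hI2
  have hn1 : ‖x - u‖^2 = (u - x)^2 := by
    rw [Real.norm_eq_abs, sq_abs]; ring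
  have hn2 : ‖u - x‖^2 = (u - x)^2 := by
    rw [Real.norm_eq_abs, sq_abs]
  rw [hn1] at hr1
  rw [hn2] at hr2
  nlinarith [hosc, hr1, hr2]
end
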